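/- With notation as in the factor update F* = (A Bᵀ + ρ C)(B Bᵀ + ρ I)⁻¹: if ‖A‖_F ≤ b, ‖B‖_F ≤ a', and ‖C‖_F ≤ a, then ‖F*‖_F ≤ (b·a' + ρa)·√r/ρ, where r is the size of the square matrix B Bᵀ. -/
import Mathlib


open Matrix

/-- Frobenius norm of a matrix. -/
noncomputable def frobNorm {m n : ℕ} (A : Matrix (Fin m) (Fin n) ℝ) : ℝ :=
  Real.sqrt (∑ i, ∑ j, (A i j) ^ 2)

attribute [local instance] Matrix.frobeniusSeminormedAddCommGroup
  Matrix.frobeniusNormedSpace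

lemma frobNorm_eq_norm {m n : ℕ} (A : Matrix (Fin m) (Fin n) ℝ) : frobNorm A = ‖A‖ := by
  rw [frobNorm, Matrix.frobenius_norm_def, Real.sqrt_eq_rpow]
  congr 1
  refine Finset.sum_congr rfl fun i _ => Finset.sum_congr rfl fun j _ => ?_
  rw [Real.norm_eq_abs, Real.rpow_two, sq_abs]

lemma frobNorm_nonneg {m n : ℕ} (A : Matrix (Fin m) (Fin n) ℝ) : 0 ≤ frobNorm A :=
  Real.sqrt_nonneg _

/-- Quadratic form lower bound for `B * Bᵀ + ρ • 1`. -/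
lemma quad_lower {r n : ℕ} (ρ : ℝ) (B : Matrix (Fin r) (Fin n) ℝ) (y : Fin r → ℝ) :
    ρ * ∑ i, y i ^ 2 ≤ y ⬝ᵥ ((B * Bᵀ + ρ • (1 : Matrix (Fin r) (Fin r) ℝ)) *ᵥ y) := by
  have h1 : y ⬝ᵥ ((B * Bᵀ) *ᵥ y) = (Bᵀ *ᵥ y) ⬝ᵥ (Bᵀ *ᵥ y) := by
    rw [← mulVec_mulVec, dotProduct_mulVec, mulVec_transpose]
  have h2 : y ⬝ᵥ ((ρ • (1 : Matrix (Fin r) (Fin r) ℝ)) *ᵥ y) = ρ * ∑ i, y i ^ 2 := by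
    rw [smul_mulVec, one_mulVec, dotProduct_smul]
    simp [dotProduct, sq, Finset.mul_sum]
  rw [add_mulVec, dotProduct_add, h1, h2]
  have : 0 ≤ (Bᵀ *ᵥ y) ⬝ᵥ (Bᵀ *ᵥ y) := by
    apply Finset.sum_nonneg
    intro i _
    exact mul_self_nonneg _
  linarith

/-- The matrix `B * Bᵀ + ρ • 1` has nonzero determinant. -/
lemma det_ne_zero {r n : ℕ} {ρ : ℝ} (hρ : 0 < ρ) (B : Matrix (Fin r) (Fin n) ℝ) :
    (B * Bᵀ + ρ • (1 : Matrix (Fin r) (Fin r) ℝ)).det ≠ 0 := by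
  intro hdet
  obtain ⟨v, hv, hMv⟩ := (Matrix.exists_mulVec_eq_zero_iff).mpr hdet
  have h := quad_lower ρ B v
  rw [hMv] at h
  simp only [dotProduct_zero] at h
  have hsum : ∑ i, v i ^ 2 ≤ 0 := by
    by_contra hc
    push_neg at hc
    nlinarith
  have hzero : ∀ i, v i = 0 := by
    intro i
    have hnn : ∀ i ∈ Finset.univ, (0:ℝ) ≤ v i ^ 2 := fun i _ => sq_nonneg _
    have := (Finset.sum_eq_zero_iff_of_nonneg hnn).mp
      (le_antisymm hsum (Finset.sum_nonneg hnn))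
    exact pow_eq_zero_iff (by norm_num) |>.mp (this i (Finset.mem_univ i))
  exact hv (funext hzero)

/-- mulVec norm lower bound. -/
lemma mulVec_sq_lower {r n : ℕ} {ρ : ℝ} (hρ : 0 < ρ) (B : Matrix (Fin r) (Fin n) ℝ)
    (y : Fin r → ℝ) :
    ρ ^ 2 * ∑ i, y i ^ 2 ≤
      ∑ i, (((B * Bᵀ + ρ • (1 : Matrix (Fin r) (Fin r) ℝ)) *ᵥ y) i) ^ 2 := by
  set M := B * Bᵀ + ρ • (1 : Matrix (Fin r) (Fin r) ℝ) with hM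
  have hq := quad_lower ρ B y
  have hcs : (∑ i, y i * (M *ᵥ y) i) ^ 2 ≤ (∑ i, y i ^ 2) * ∑ i, ((M *ᵥ y) i) ^ 2 :=
    Finset.sum_mul_sq_le_sq_mul_sq _ _ _
  have hy : 0 ≤ ∑ i, y i ^ 2 := Finset.sum_nonneg fun i _ => sq_nonneg _
  rcases eq_or_lt_of_le hy with h0 | h0
  · have : ∀ i, y i = 0 := by
      intro i
      have hnn : ∀ i ∈ Finset.univ, (0:ℝ) ≤ y i ^ 2 := fun i _ => sq_nonneg _
      have := (Finset.sum_eq_zero_iff_of_nonneg hnn).mp h0.symm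
      exact pow_eq_zero_iff (by norm_num) |>.mp (this i (Finset.mem_univ i))
    have hsum0 : ∑ i, y i ^ 2 = 0 := h0.symm
    rw [hsum0, mul_zero]
    exact Finset.sum_nonneg fun i _ => sq_nonneg _
  · have hdot : y ⬝ᵥ (M *ᵥ y) = ∑ i, y i * (M *ᵥ y) i := rfl
    rw [hdot] at hq
    have hsq : (ρ * ∑ i, y i ^ 2) ^ 2 ≤ (∑ i, y i * (M *ᵥ y) i) ^ 2 := by
      apply sq_le_sq'
      · nlinarith
      · exact hq
    have h2 : (ρ * ∑ i, y i ^ 2) ^ 2 ≤ (∑ i, y i ^ 2) * ∑ i, ((M *ᵥ y) i) ^ 2 :=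
      le_trans hsq hcs
    rw [mul_pow] at h2
    nlinarith [h2, h0]

/-- Frobenius norm bound for the inverse. -/
lemma inv_frobNorm_bound {r n : ℕ} {ρ : ℝ} (hρ : 0 < ρ) (B : Matrix (Fin r) (Fin n) ℝ) :
    frobNorm (B * Bᵀ + ρ • (1 : Matrix (Fin r) (Fin r) ℝ))⁻¹ ≤ Real.sqrt r / ρ := by
  set M := B * Bᵀ + ρ • (1 : Matrix (Fin r) (Fin r) ℝ) with hM
  have hdet : IsUnit M.det := isUnit_iff_ne_zero.mpr (det_ne_zero hρ B)
  have hMM : M * M⁻¹ = 1 := Matrix.mul_nonsing_inv M hdet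
  have hcol : ∀ j : Fin r, ∑ i, (M⁻¹ i j) ^ 2 ≤ 1 / ρ ^ 2 := by
    intro j
    set y : Fin r → ℝ := fun i => M⁻¹ i j with hy
    have hMy : M *ᵥ y = fun i => (1 : Matrix (Fin r) (Fin r) ℝ) i j := by
      funext i
      have : (M * M⁻¹) i j = (1 : Matrix (Fin r) (Fin r) ℝ) i j := by rw [hMM]
      simpa [Matrix.mul_apply, Matrix.mulVec, dotProduct, hy] using this
    have hlow := mulVec_sq_lower hρ B y
    rw [← hM, hMy] at hlow
    have hone : ∑ i, ((1 : Matrix (Fin r) (Fin r) ℝ) i j) ^ 2 = 1 := by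
      simp [Matrix.one_apply]
    rw [hone] at hlow
    rw [le_div_iff₀ (pow_pos hρ 2)]
    linarith
  have hsum : ∑ i, ∑ j, (M⁻¹ i j) ^ 2 ≤ (r : ℝ) / ρ ^ 2 := by
    rw [Finset.sum_comm]
    calc ∑ j, ∑ i, (M⁻¹ i j) ^ 2 ≤ ∑ _j : Fin r, 1 / ρ ^ 2 :=
          Finset.sum_le_sum fun j _ => hcol j
      _ = (r : ℝ) / ρ ^ 2 := by simp [div_eq_mul_inv]
  calc frobNorm M⁻¹ ≤ Real.sqrt ((r : ℝ) / ρ ^ 2) := Real.sqrt_le_sqrt hsum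
    _ = Real.sqrt r / ρ := by
        rw [Real.sqrt_div (Nat.cast_nonneg r), Real.sqrt_sq hρ.le]

theorem factor_update_bound (m r n : ℕ) (ρ a a' b : ℝ) (hρ : 0 < ρ)
    (A : Matrix (Fin m) (Fin n) ℝ) (B : Matrix (Fin r) (Fin n) ℝ)
    (C : Matrix (Fin m) (Fin r) ℝ)
    (hA : frobNorm A ≤ b) (hB : frobNorm B ≤ a') (hC : frobNorm C ≤ a) :
    frobNorm ((A * Bᵀ + ρ • C) * (B * Bᵀ + ρ • (1 : Matrix (Fin r) (Fin r) ℝ))⁻¹) ≤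
      (b * a' + ρ * a) * Real.sqrt r / ρ := by
  have hA0 : 0 ≤ b := le_trans (frobNorm_nonneg A) hA
  have hB0 : 0 ≤ a' := le_trans (frobNorm_nonneg B) hB
  have hC0 : 0 ≤ a := le_trans (frobNorm_nonneg C) hC
  set M := B * Bᵀ + ρ • (1 : Matrix (Fin r) (Fin r) ℝ) with hM
  have hX : frobNorm (A * Bᵀ + ρ • C) ≤ b * a' + ρ * a := by
    rw [frobNorm_eq_norm]
    calc ‖A * Bᵀ + ρ • C‖ ≤ ‖A * Bᵀ‖ + ‖ρ • C‖ := norm_add_le _ _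
      _ ≤ ‖A‖ * ‖Bᵀ‖ + ‖ρ‖ * ‖C‖ := by
          gcongr
          · exact Matrix.frobenius_norm_mul A Bᵀ
          · rw [norm_smul]
      _ = ‖A‖ * ‖B‖ + ρ * ‖C‖ := by
          rw [Matrix.frobenius_norm_transpose, Real.norm_eq_abs, abs_of_pos hρ]
      _ ≤ b * a' + ρ * a := by
          rw [← frobNorm_eq_norm, ← frobNorm_eq_norm, ← frobNorm_eq_norm]
          have h1 := mul_le_mul hA hB (frobNorm_nonneg B) hA0
          have h2 := mul_le_mul_of_nonneg_left hC hρ.le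
          linarith
  have hmul : frobNorm ((A * Bᵀ + ρ • C) * M⁻¹) ≤
      frobNorm (A * Bᵀ + ρ • C) * frobNorm M⁻¹ := by
    rw [frobNorm_eq_norm, frobNorm_eq_norm, frobNorm_eq_norm]
    exact Matrix.frobenius_norm_mul _ _
  have hinv := inv_frobNorm_bound hρ B
  calc frobNorm ((A * Bᵀ + ρ • C) * M⁻¹)
      ≤ frobNorm (A * Bᵀ + ρ • C) * frobNorm M⁻¹ := hmul
    _ ≤ (b * a' + ρ * a) * (Real.sqrt r / ρ) := by
        apply mul_le_mul hX hinv (frobNorm_nonneg _) (by positivity)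
    _ = (b * a' + ρ * a) * Real.sqrt r / ρ := by ring
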